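/- arXiv:2601.00652 — 3 statements merged into one kernel-verified Lean document; each statement's English description precedes it below -/
import Mathlib

section
/- Fix 1 < p_min ≤ p_max < ∞. There exists, for every ε ∈ (0,1), a constant C_ε > 0 depending only on ε, p_min, p_max such that for every p ∈ [p_min, p_max] and all y, z ∈ ℝⁿ: |y − z|^p ≤ ε |y|^p + C_ε · (|y|^{p-2} y − |z|^{p-2} z) · (y − z). -/
/-!
With `c = min (p_min - 1) (2 ^ (1 - p_max))` one has the monotonicity estimate
`c (|y| + |z|)^(p-2) |y - z|^2 ≤ J_p(y, z)` for every `p` in the range. In terms of `a = |y|`,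
`b = |z|` and `s = ⟨y, z⟩` both sides are affine in `s ∈ [-ab, ab]`, so it suffices to check
`s = ab`, where it follows from concavity (`p ≤ 2`) or monotonicity (`p ≥ 2`) of `t ↦ t^(p-1)`,
and `s = -ab`, where it follows from `((a + b) / 2)^(p-1) ≤ max a b ^ (p-1)`.
If `|y| + |z| ≤ (3/ε) |y - z|`, the estimate gives `|y - z|^p ≤ 3/(εc) J_p(y, z)`;
otherwise `|y - z| ≤ ε |y|`, hence `|y - z|^p ≤ ε |y|^p`.
-/

open Real
open scoped RealInnerProductSpace

theorem Real.rpow_sub_two_mul_self {x p : ℝ} (hx : 0 ≤ x) (hp : p ≠ 1) :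
    x ^ (p - 2) * x = x ^ (p - 1) := by
  rw [← rpow_add_one' hx (by contrapose! hp; linarith)]
  ring_nf

theorem sub_one_mul_rpow_le_rpow_sub_rpow {p a b : ℝ} (hp : 1 < p) (hp₂ : p ≤ 2) (hb : 0 ≤ b)
    (hba : b ≤ a) : (p - 1) * ((a + b) ^ (p - 2) * (a - b)) ≤ a ^ (p - 1) - b ^ (p - 1) := by
  obtain rfl | hba := hba.eq_or_lt
  · simp
  have ha : 0 < a := hb.trans_lt hba
  -- tangent line of the concave `t ↦ t ^ (p - 1)` at `a`
  have tangent : b ^ (p - 1) ≤ a ^ (p - 1) - (p - 1) * (a ^ (p - 2) * (a - b)) := by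
    have bernoulli := rpow_one_add_le_one_add_mul_self (s := b / a - 1)
      (by linarith [div_nonneg hb ha.le]) (by linarith : 0 ≤ p - 1) (by linarith : p - 1 ≤ 1)
    rw [add_sub_cancel, div_rpow hb ha.le, div_le_iff₀ (rpow_pos_of_pos ha _),
      ← rpow_sub_two_mul_self ha.le hp.ne'] at bernoulli
    rw [← rpow_sub_two_mul_self ha.le hp.ne']
    refine bernoulli.trans_eq ?_
    field_simp
    ring
  have : (a + b) ^ (p - 2) ≤ a ^ (p - 2) := rpow_le_rpow_of_nonpos ha (by linarith) (by linarith)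
  calc (p - 1) * ((a + b) ^ (p - 2) * (a - b)) ≤ (p - 1) * (a ^ (p - 2) * (a - b)) := by
        gcongr
    _ ≤ a ^ (p - 1) - b ^ (p - 1) := by linarith

theorem two_rpow_mul_rpow_le_rpow_sub_rpow {p a b : ℝ} (hp : 2 ≤ p) (hb : 0 ≤ b) (hba : b ≤ a) :
    2 ^ (2 - p) * ((a + b) ^ (p - 2) * (a - b)) ≤ a ^ (p - 1) - b ^ (p - 1) := by
  have ha : 0 ≤ a := hb.trans hba
  calc 2 ^ (2 - p) * ((a + b) ^ (p - 2) * (a - b)) = ((a + b) / 2) ^ (p - 2) * (a - b) := by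
        rw [show 2 - p = -(p - 2) by ring, rpow_neg zero_le_two, div_rpow (by linarith) zero_le_two]
        ring
    _ ≤ a ^ (p - 2) * (a - b) := by
        gcongr
        linarith
    _ ≤ a ^ (p - 2) * a - b ^ (p - 2) * b := by
        have : b ^ (p - 2) ≤ a ^ (p - 2) := rpow_le_rpow hb hba (by linarith)
        nlinarith
    _ = a ^ (p - 1) - b ^ (p - 1) := by
        rw [rpow_sub_two_mul_self ha (by linarith), rpow_sub_two_mul_self hb (by linarith)]

theorem mul_rpow_mul_sq_le_rpow_sub_rpow_mul_sub {p c a b : ℝ} (hp : 1 < p) (hc₁ : c ≤ p - 1)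
    (hc₂ : c ≤ 2 ^ (1 - p)) (ha : 0 ≤ a) (hb : 0 ≤ b) :
    c * ((a + b) ^ (p - 2) * (a - b) ^ 2) ≤ (a ^ (p - 1) - b ^ (p - 1)) * (a - b) := by
  wlog hba : b ≤ a generalizing a b
  · calc c * ((a + b) ^ (p - 2) * (a - b) ^ 2) = c * ((b + a) ^ (p - 2) * (b - a) ^ 2) := by
          rw [add_comm]; ring
      _ ≤ (b ^ (p - 1) - a ^ (p - 1)) * (b - a) := this hb ha (le_of_not_ge hba)
      _ = (a ^ (p - 1) - b ^ (p - 1)) * (a - b) := by ring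
  have hX : 0 ≤ (a + b) ^ (p - 2) * (a - b) :=
    mul_nonneg (rpow_nonneg (by linarith) _) (sub_nonneg.2 hba)
  have key : c * ((a + b) ^ (p - 2) * (a - b)) ≤ a ^ (p - 1) - b ^ (p - 1) := by
    rcases le_total p 2 with hp₂ | hp₂
    · exact (mul_le_mul_of_nonneg_right hc₁ hX).trans
        (sub_one_mul_rpow_le_rpow_sub_rpow hp hp₂ hb hba)
    · have : c ≤ 2 ^ (2 - p) := hc₂.trans (rpow_le_rpow_of_exponent_le one_le_two (by linarith))
      exact (mul_le_mul_of_nonneg_right this hX).trans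
        (two_rpow_mul_rpow_le_rpow_sub_rpow hp₂ hb hba)
  calc c * ((a + b) ^ (p - 2) * (a - b) ^ 2) = c * ((a + b) ^ (p - 2) * (a - b)) * (a - b) := by
        ring
    _ ≤ (a ^ (p - 1) - b ^ (p - 1)) * (a - b) := mul_le_mul_of_nonneg_right key (by linarith)

theorem two_rpow_neg_mul_add_rpow_le {q a b : ℝ} (hq : 0 ≤ q) (ha : 0 ≤ a) (hb : 0 ≤ b) :
    2 ^ (-q) * (a + b) ^ q ≤ a ^ q + b ^ q := by
  calc 2 ^ (-q) * (a + b) ^ q = ((a + b) / 2) ^ q := by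
        rw [rpow_neg zero_le_two, div_rpow (by positivity) zero_le_two]
        ring
    _ ≤ max a b ^ q := rpow_le_rpow (by positivity)
        (by linarith [le_max_left a b, le_max_right a b]) hq
    _ ≤ a ^ q + b ^ q := by
        rcases max_choice a b with h | h <;> rw [h] <;>
          linarith [rpow_nonneg ha q, rpow_nonneg hb q]

theorem add_mul_nonneg_of_abs_le {α β m s : ℝ} (hpos : 0 ≤ α + β * m) (hneg : 0 ≤ α - β * m)
    (hs : |s| ≤ m) : 0 ≤ α + β * s := by
  obtain ⟨hs₁, hs₂⟩ := abs_le.1 hs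
  rcases le_total 0 β with hβ | hβ <;> nlinarith

theorem mul_rpow_mul_le_of_abs_le {p c a b s : ℝ} (hp : 1 < p) (hc₁ : c ≤ p - 1)
    (hc₂ : c ≤ 2 ^ (1 - p)) (ha : 0 ≤ a) (hb : 0 ≤ b) (hs : |s| ≤ a * b) :
    c * ((a + b) ^ (p - 2) * (a ^ 2 - 2 * s + b ^ 2)) ≤
      a ^ (p - 2) * a ^ 2 + b ^ (p - 2) * b ^ 2 - (a ^ (p - 2) + b ^ (p - 2)) * s := by
  have at_ab := mul_rpow_mul_sq_le_rpow_sub_rpow_mul_sub hp hc₁ hc₂ ha hb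
  have at_neg_ab : c * ((a + b) ^ (p - 2) * (a + b) ^ 2) ≤ (a ^ (p - 1) + b ^ (p - 1)) * (a + b) :=
    calc c * ((a + b) ^ (p - 2) * (a + b) ^ 2) = c * (a + b) ^ (p - 1) * (a + b) := by
          rw [← rpow_sub_two_mul_self (by positivity) hp.ne']; ring
      _ ≤ 2 ^ (-(p - 1)) * (a + b) ^ (p - 1) * (a + b) := by
          gcongr
          simpa using hc₂
      _ ≤ (a ^ (p - 1) + b ^ (p - 1)) * (a + b) := by
          gcongr
          exact two_rpow_neg_mul_add_rpow_le (by linarith) ha hb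
  rw [← rpow_sub_two_mul_self ha hp.ne', ← rpow_sub_two_mul_self hb hp.ne'] at at_ab at_neg_ab
  have := add_mul_nonneg_of_abs_le
    (α := a ^ (p - 2) * a ^ 2 + b ^ (p - 2) * b ^ 2 - c * ((a + b) ^ (p - 2) * (a ^ 2 + b ^ 2)))
    (β := 2 * c * (a + b) ^ (p - 2) - (a ^ (p - 2) + b ^ (p - 2))) (by linarith) (by linarith) hs
  linarith

theorem mul_rpow_mul_norm_sub_sq_le_inner {E : Type*} [NormedAddCommGroup E]
    [InnerProductSpace ℝ E] {p c : ℝ} (hp : 1 < p) (hc₁ : c ≤ p - 1) (hc₂ : c ≤ 2 ^ (1 - p))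
    (y z : E) :
    c * ((‖y‖ + ‖z‖) ^ (p - 2) * ‖y - z‖ ^ 2) ≤ ⟪‖y‖ ^ (p - 2) • y - ‖z‖ ^ (p - 2) • z, y - z⟫ := by
  have expand : ⟪‖y‖ ^ (p - 2) • y - ‖z‖ ^ (p - 2) • z, y - z⟫ =
      ‖y‖ ^ (p - 2) * ‖y‖ ^ 2 + ‖z‖ ^ (p - 2) * ‖z‖ ^ 2 -
        (‖y‖ ^ (p - 2) + ‖z‖ ^ (p - 2)) * ⟪y, z⟫ := by
    simp only [inner_sub_left, inner_sub_right, real_inner_smul_left, real_inner_self_eq_norm_sq,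
      real_inner_comm z y]
    ring
  rw [expand, norm_sub_sq_real]
  exact mul_rpow_mul_le_of_abs_le hp hc₁ hc₂ (norm_nonneg y) (norm_nonneg z)
    (abs_real_inner_le_norm y z)

theorem rpow_le_mul_rpow_sub_two_mul_sq {p w t K : ℝ} (hp : 1 ≤ p) (hw : 0 ≤ w) (hwt : w ≤ t)
    (htK : t ≤ K * w) : w ^ p ≤ K * (t ^ (p - 2) * w ^ 2) := by
  obtain rfl | hw := hw.eq_or_lt
  · simp [zero_rpow (by linarith : p ≠ 0)]
  have ht : 0 < t := hw.trans_le hwt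
  calc w ^ p = w ^ (p - 1) * w := by rw [rpow_sub_one hw.ne', div_mul_cancel₀ _ hw.ne']
    _ ≤ t ^ (p - 1) * w := by gcongr
    _ = t ^ (p - 2) * t * w := by
        rw [show p - 2 = p - 1 - 1 by ring, rpow_sub_one ht.ne' (p - 1), div_mul_cancel₀ _ ht.ne']
    _ ≤ t ^ (p - 2) * (K * w) * w := by gcongr
    _ = K * (t ^ (p - 2) * w ^ 2) := by ring

theorem norm_sub_le_mul_norm_of_lt {E : Type*} [SeminormedAddCommGroup E] {ε : ℝ} (hε₀ : 0 < ε)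
    (hε₁ : ε ≤ 1) {y z : E} (h : 3 / ε * ‖y - z‖ < ‖y‖ + ‖z‖) : ‖y - z‖ ≤ ε * ‖y‖ := by
  have hz : ‖z‖ ≤ ‖y‖ + ‖y - z‖ := norm_le_norm_add_norm_sub y z
  rw [div_mul_eq_mul_div, div_lt_iff₀ hε₀] at h
  nlinarith [norm_nonneg (y - z)]

theorem rpow_le_mul_rpow_of_le_mul {p ε w a : ℝ} (hp : 1 ≤ p) (hε₀ : 0 ≤ ε) (hε₁ : ε ≤ 1)
    (hw : 0 ≤ w) (ha : 0 ≤ a) (h : w ≤ ε * a) : w ^ p ≤ ε * a ^ p :=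
  calc w ^ p ≤ (ε * a) ^ p := rpow_le_rpow hw h (by linarith)
    _ = ε ^ p * a ^ p := mul_rpow hε₀ ha
    _ ≤ ε * a ^ p := by gcongr; exact rpow_le_self_of_le_one hε₀ hε₁ hp

theorem dist_pow_le_eps_add_Jp_general
    (n : ℕ) (pmin pmax : ℝ) (h1 : 1 < pmin)
    (ε : ℝ) (hε : ε ∈ Set.Ioo (0 : ℝ) 1) :
    ∃ C : ℝ, 0 < C ∧
      ∀ p ∈ Set.Icc pmin pmax, ∀ y z : EuclideanSpace ℝ (Fin n),
        ‖y - z‖ ^ p ≤ ε * ‖y‖ ^ p +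
          C * (inner ℝ ((‖y‖ ^ (p - 2)) • y - (‖z‖ ^ (p - 2)) • z) (y - z) : ℝ) := by
  obtain ⟨hε₀, hε₁⟩ := hε
  set c := min (pmin - 1) (2 ^ (1 - pmax))
  have hc : 0 < c := lt_min (by linarith) (by positivity)
  refine ⟨3 / (ε * c), by positivity, fun p ⟨hpmin, hpmax⟩ y z => ?_⟩
  have hp : 1 < p := h1.trans_le hpmin
  have hJ := mul_rpow_mul_norm_sub_sq_le_inner (c := c) hp ((min_le_left _ _).trans (by linarith))
    ((min_le_right _ _).trans (rpow_le_rpow_of_exponent_le one_le_two (by linarith))) y z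
  set J := ⟪‖y‖ ^ (p - 2) • y - ‖z‖ ^ (p - 2) • z, y - z⟫
  have hJ₀ : 0 ≤ J := (mul_nonneg hc.le (by positivity)).trans hJ
  rcases le_or_gt (‖y‖ + ‖z‖) (3 / ε * ‖y - z‖) with hclose | hfar
  · calc ‖y - z‖ ^ p ≤ 3 / ε * ((‖y‖ + ‖z‖) ^ (p - 2) * ‖y - z‖ ^ 2) :=
          rpow_le_mul_rpow_sub_two_mul_sq hp.le (norm_nonneg _) (norm_sub_le y z) hclose
      _ = 3 / (ε * c) * (c * ((‖y‖ + ‖z‖) ^ (p - 2) * ‖y - z‖ ^ 2)) := by field_simp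
      _ ≤ 3 / (ε * c) * J := by gcongr
      _ ≤ ε * ‖y‖ ^ p + 3 / (ε * c) * J := le_add_of_nonneg_left (by positivity)
  · have hsmall := rpow_le_mul_rpow_of_le_mul hp.le hε₀.le hε₁.le (norm_nonneg _) (norm_nonneg _)
      (norm_sub_le_mul_norm_of_lt hε₀ hε₁.le hfar)
    have hCJ : 0 ≤ 3 / (ε * c) * J := by positivity
    linarith

/-- `|y − z|^p ≤ ε |y|^p + C_ε J_p(y,z)`, uniformly in `p ∈ [p_min, p_max]`. -/
theorem dist_pow_le_eps_add_Jp
    (n : ℕ) (pmin pmax : ℝ) (h1 : 1 < pmin) (h2 : pmin ≤ pmax)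
    (ε : ℝ) (hε : ε ∈ Set.Ioo (0 : ℝ) 1) :
    ∃ C : ℝ, 0 < C ∧
      ∀ p ∈ Set.Icc pmin pmax, ∀ y z : EuclideanSpace ℝ (Fin n),
        ‖y - z‖ ^ p ≤ ε * ‖y‖ ^ p +
          C * (inner ℝ ((‖y‖ ^ (p - 2)) • y - (‖z‖ ^ (p - 2)) • z) (y - z) : ℝ) :=
  dist_pow_le_eps_add_Jp_general n pmin pmax h1 ε hε
end

section
/- Let 1 < p_min ≤ p_max < ∞. There is a constant C = C(p_min, p_max) > 0 such that for every p, q ∈ [p_min, p_max] with q ≥ p and every y ∈ ℝⁿ: | |y|^{q-1} − |y|^{p-1} | ≤ C (q − p) [ 1 + |y|^{q-1} log(e + |y|^q) ]. -/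
/-! With `t = ‖y‖`, `a = p - 1`, `b = q - 1` and `s = t ^ (b - a)`, write
`t ^ b - t ^ a = t ^ b (1 - s⁻¹)`; then `1 - s⁻¹ ≤ log s` gives
`|t ^ b - t ^ a| ≤ (b - a) |log t| max (t ^ a) (t ^ b)`. For `t ≥ 1` this is at most
`(b - a) t ^ b log (e + t ^ q)`; for `t ≤ 1` it is at most `(b - a) / a`, since
`t ^ a |log t| ≤ 1 / a` (which is `log x ≤ x ^ a / a` at `x = 1 / t`). -/

open Real

namespace Real

lemma rpow_sub_rpow_le_mul_log_mul_rpow {t : ℝ} (ht : 0 < t) (a b : ℝ) :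
    t ^ b - t ^ a ≤ (b - a) * log t * t ^ b := by
  have hlog := one_sub_inv_le_log_of_pos (rpow_pos_of_pos ht (b - a))
  rw [log_rpow ht, ← rpow_neg ht.le, neg_sub] at hlog
  have hsplit : t ^ a = t ^ b * t ^ (a - b) := by rw [← rpow_add ht]; ring_nf
  calc t ^ b - t ^ a = t ^ b * (1 - t ^ (a - b)) := by rw [hsplit]; ring
    _ ≤ t ^ b * ((b - a) * log t) := mul_le_mul_of_nonneg_left hlog (by positivity)
    _ = (b - a) * log t * t ^ b := by ring

lemma rpow_mul_neg_log_le_inv {t a : ℝ} (ht : 0 < t) (ha : 0 < a) :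
    t ^ a * -log t ≤ a⁻¹ := by
  have hlog := log_le_rpow_div (inv_pos.2 ht).le ha
  rw [log_inv, inv_rpow ht.le, div_eq_mul_inv] at hlog
  calc t ^ a * -log t ≤ t ^ a * ((t ^ a)⁻¹ * a⁻¹) := by gcongr
    _ = a⁻¹ := by field_simp

lemma abs_rpow_sub_rpow_le_of_le_one {t a b : ℝ} (ht₀ : 0 ≤ t) (ht₁ : t ≤ 1) (ha : 0 < a)
    (hab : a ≤ b) : |t ^ b - t ^ a| ≤ (b - a) * a⁻¹ := by
  rcases ht₀.eq_or_lt with rfl | ht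
  · rw [zero_rpow (by linarith), zero_rpow ha.ne', sub_zero, abs_zero]
    exact mul_nonneg (by linarith) (inv_nonneg.2 ha.le)
  rw [abs_sub_comm, abs_of_nonneg (sub_nonneg.2 (rpow_le_rpow_of_exponent_ge ht ht₁ hab))]
  calc t ^ a - t ^ b ≤ (a - b) * log t * t ^ a := rpow_sub_rpow_le_mul_log_mul_rpow ht b a
    _ = (b - a) * (t ^ a * -log t) := by ring
    _ ≤ (b - a) * a⁻¹ :=
        mul_le_mul_of_nonneg_left (rpow_mul_neg_log_le_inv ht ha) (by linarith)

lemma abs_rpow_sub_rpow_le_of_one_le {t a b : ℝ} (ht : 1 ≤ t) (hab : a ≤ b) :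
    |t ^ b - t ^ a| ≤ (b - a) * log t * t ^ b := by
  rw [abs_of_nonneg (sub_nonneg.2 (rpow_le_rpow_of_exponent_le ht hab))]
  exact rpow_sub_rpow_le_mul_log_mul_rpow (by linarith) a b

end Real

theorem abs_pow_sub_pow_exponent_le_general
    (n : ℕ) (pmin pmax : ℝ) (h1 : 1 < pmin) :
    ∃ C : ℝ, 0 < C ∧
      ∀ p ∈ Set.Icc pmin pmax, ∀ q ∈ Set.Icc pmin pmax, p ≤ q →
        ∀ y : EuclideanSpace ℝ (Fin n),
          |‖y‖ ^ (q - 1) - ‖y‖ ^ (p - 1)| ≤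
            C * (q - p) * (1 + ‖y‖ ^ (q - 1) * Real.log (Real.exp 1 + ‖y‖ ^ q)) := by
  have hpmin : 0 < pmin - 1 := by linarith
  refine ⟨1 + (pmin - 1)⁻¹, by positivity, ?_⟩
  rintro p ⟨hp, -⟩ q ⟨hq, -⟩ hpq y
  have hexp : (q - 1) - (p - 1) = q - p := by ring
  have hqp : 0 ≤ q - p := by linarith
  have hC : 1 ≤ 1 + (pmin - 1)⁻¹ := by simp only [le_add_iff_nonneg_right]; positivity
  have hweight : 0 ≤ ‖y‖ ^ (q - 1) * log (exp 1 + ‖y‖ ^ q) :=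
    mul_nonneg (by positivity)
      (log_nonneg (by linarith [add_one_le_exp 1, rpow_nonneg (norm_nonneg y) q]))
  rcases le_total ‖y‖ 1 with hy | hy
  · have hinv : (p - 1)⁻¹ ≤ (pmin - 1)⁻¹ := inv_anti₀ hpmin (by linarith)
    calc |‖y‖ ^ (q - 1) - ‖y‖ ^ (p - 1)|
        ≤ ((q - 1) - (p - 1)) * (p - 1)⁻¹ :=
          abs_rpow_sub_rpow_le_of_le_one (norm_nonneg y) hy (by linarith) (by linarith)
      _ ≤ (1 + (pmin - 1)⁻¹) * (q - p) * 1 := by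
          rw [hexp]; nlinarith [mul_le_mul_of_nonneg_left hinv hqp]
      _ ≤ _ := by gcongr; linarith
  · have hlog : log ‖y‖ ≤ log (exp 1 + ‖y‖ ^ q) :=
      log_le_log (by linarith)
        (by linarith [exp_pos 1, self_le_rpow_of_one_le hy (by linarith : 1 ≤ q)])
    calc |‖y‖ ^ (q - 1) - ‖y‖ ^ (p - 1)|
        ≤ ((q - 1) - (p - 1)) * log ‖y‖ * ‖y‖ ^ (q - 1) :=
          abs_rpow_sub_rpow_le_of_one_le hy (by linarith)
      _ ≤ 1 * (q - p) * (‖y‖ ^ (q - 1) * log (exp 1 + ‖y‖ ^ q)) := by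
          rw [hexp, one_mul, mul_assoc, mul_comm (log _)]; gcongr
      _ ≤ _ := by gcongr; linarith

/-- Quantitative continuity of `t ↦ |y|^{t-1}` in the exponent, with logarithmic weight. -/
theorem abs_pow_sub_pow_exponent_le
    (n : ℕ) (pmin pmax : ℝ) (h1 : 1 < pmin) (h2 : pmin ≤ pmax) :
    ∃ C : ℝ, 0 < C ∧
      ∀ p ∈ Set.Icc pmin pmax, ∀ q ∈ Set.Icc pmin pmax, p ≤ q →
        ∀ y : EuclideanSpace ℝ (Fin n),
          |‖y‖ ^ (q - 1) - ‖y‖ ^ (p - 1)| ≤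
            C * (q - p) * (1 + ‖y‖ ^ (q - 1) * Real.log (Real.exp 1 + ‖y‖ ^ q)) :=
  abs_pow_sub_pow_exponent_le_general n pmin pmax h1
end

section
/- Let s ≥ 1, β ∈ [0, n/s), and f ∈ L^s(ℝⁿ). There exists C = C(n, s, β) > 0 such that for every λ > 0: |{ x ∈ ℝⁿ : M_β f(x) > λ }| ≤ C ( λ^{-s} ∫_{ℝⁿ} |f|^s )^{n/(n − β s)}, where M_β f(x) = sup_{r>0} r^β ⨍_{B_r(x)} |f|. -/
open MeasureTheory ENNReal

/-- Fractional maximal function of order `β`. -/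
noncomputable def fracMax (n : ℕ) (β : ℝ) (f : (Fin n → ℝ) → ℝ) (x : Fin n → ℝ) : ℝ≥0∞ :=
  ⨆ (r : ℝ) (_ : 0 < r),
    ENNReal.ofReal (r ^ β) *
      ((volume (Metric.ball x r))⁻¹ * ∫⁻ y in Metric.ball x r, ENNReal.ofReal |f y|)

/-- Cut-off fractional maximal function `M_β^ρ` (radii `0 < r < ρ`). -/
noncomputable def fracMaxCut (n : ℕ) (β ρ : ℝ) (f : (Fin n → ℝ) → ℝ) (x : Fin n → ℝ) : ℝ≥0∞ :=
  ⨆ (r : ℝ) (_ : 0 < r) (_ : r < ρ),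
    ENNReal.ofReal (r ^ β) *
      ((volume (Metric.ball x r))⁻¹ * ∫⁻ y in Metric.ball x r, ENNReal.ofReal |f y|)

/-- Tail fractional maximal function `T_β^ρ` (radii `r ≥ ρ`). -/
noncomputable def fracMaxTail (n : ℕ) (β ρ : ℝ) (f : (Fin n → ℝ) → ℝ) (x : Fin n → ℝ) : ℝ≥0∞ :=
  ⨆ (r : ℝ) (_ : ρ ≤ r),
    ENNReal.ofReal (r ^ β) *
      ((volume (Metric.ball x r))⁻¹ * ∫⁻ y in Metric.ball x r, ENNReal.ofReal |f y|)

/-!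
If `M_β f(x) > λ`, some ball `B = B(x, r)` has `λ < r^β ⨍_B |f|`, and Jensen's inequality gives
`λ^s |B| < r^{βs} ∫_B |f|^s`. Comparing with `∫ |f|^s` forces `r` below the radius `R` at which
`λ^s |B_R| = R^{βs} ∫ |f|^s`, so every such ball satisfies `λ^s R^{-βs} |B| ≤ ∫_B |f|^s`. The
Vitali covering lemma then bounds the superlevel set by `5^n |B_R|`, and `R^{n - βs}` is
proportional to `λ^{-s} ∫ |f|^s`.
-/

open Metric

section Jensen

variable {α : Type*} [MeasurableSpace α] {μ : Measure α} {g : α → ℝ≥0∞} {p : ℝ}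

theorem rpow_lintegral_le_lintegral_rpow [IsProbabilityMeasure μ] (hg : AEMeasurable g μ)
    (hp : 1 ≤ p) : (∫⁻ x, g x ∂μ) ^ p ≤ ∫⁻ x, g x ^ p ∂μ := by
  have h := eLpNorm'_le_eLpNorm'_of_exponent_le one_pos hp μ hg.aestronglyMeasurable
  simp only [eLpNorm'_eq_lintegral_enorm, enorm_eq_self, ENNReal.rpow_one, div_one] at h
  calc (∫⁻ x, g x ∂μ) ^ p ≤ ((∫⁻ x, g x ^ p ∂μ) ^ (1 / p)) ^ p := by gcongr
    _ = ∫⁻ x, g x ^ p ∂μ := by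
      rw [← ENNReal.rpow_mul, one_div_mul_cancel (by positivity), ENNReal.rpow_one]

theorem rpow_laverage_le_laverage_rpow [IsFiniteMeasure μ] (hg : AEMeasurable g μ)
    (hp : 1 ≤ p) : (⨍⁻ x, g x ∂μ) ^ p ≤ ⨍⁻ x, g x ^ p ∂μ := by
  rcases eq_zero_or_neZero μ with rfl | _
  · simp [ENNReal.zero_rpow_of_pos (by linarith : 0 < p)]
  simp only [laverage_eq']
  exact rpow_lintegral_le_lintegral_rpow (hg.smul_measure _) hp

end Jensen

theorem mul_measure_le_of_forall_exists_ball {E : Type*} [NormedAddCommGroup E]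
    [NormedSpace ℝ E] [FiniteDimensional ℝ E] [MeasurableSpace E] [BorelSpace E]
    (μ : Measure E) [μ.IsAddHaarMeasure] {S : Set E} {g : E → ℝ≥0∞} {K : ℝ≥0∞} {R : ℝ}
    (h : ∀ x ∈ S, ∃ r, 0 < r ∧ r ≤ R ∧ K * μ (ball x r) ≤ ∫⁻ y in ball x r, g y ∂μ) :
    K * μ S ≤ 5 ^ Module.finrank ℝ E * ∫⁻ y, g y ∂μ := by
  choose! r hr0 hrR hK using h
  obtain ⟨u, huS, hdisj, hcover⟩ :=
    Vitali.exists_disjoint_subfamily_covering_enlargement_closedBall S id r R hrR 4 (by norm_num)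
  have hdisj' : u.PairwiseDisjoint fun b => ball b (r b) :=
    hdisj.mono fun b => ball_subset_closedBall
  have hu : u.Countable := hdisj'.countable_of_isOpen (fun _ _ => isOpen_ball)
    fun b hb => nonempty_ball.mpr (hr0 b (huS hb))
  have : Countable u := hu.to_subtype
  have hSsub : S ⊆ ⋃ b ∈ u, ball b (5 * r b) := by
    intro a ha
    obtain ⟨b, hb, hab⟩ := hcover a ha
    refine Set.mem_biUnion hb (closedBall_subset_ball ?_ (hab (mem_closedBall_self (hr0 a ha).le)))
    linarith [hr0 b (huS hb)]
  have h5 : ∀ b ∈ u, μ (ball b (5 * r b)) = 5 ^ Module.finrank ℝ E * μ (ball b (r b)) := by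
    intro b hb
    rw [Measure.addHaar_ball_mul_of_pos μ b (by norm_num : (0:ℝ) < 5),
      Measure.addHaar_ball_center μ b, ENNReal.ofReal_pow (by norm_num), ENNReal.ofReal_ofNat]
  calc K * μ S ≤ K * ∑' b : u, μ (ball b (5 * r b)) := by
        gcongr
        exact (measure_mono hSsub).trans (measure_biUnion_le μ hu _)
    _ = 5 ^ Module.finrank ℝ E * ∑' b : u, K * μ (ball b (r b)) := by
        rw [← ENNReal.tsum_mul_left, ← ENNReal.tsum_mul_left]
        refine tsum_congr fun b => ?_
        rw [h5 b b.2]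
        ring
    _ ≤ 5 ^ Module.finrank ℝ E * ∑' b : u, ∫⁻ y in ball b (r b), g y ∂μ := by
        gcongr with b
        exact hK b (huS b.2)
    _ = 5 ^ Module.finrank ℝ E * ∫⁻ y in ⋃ b : u, ball b (r b), g y ∂μ := by
        rw [lintegral_iUnion (fun _ => measurableSet_ball) (hdisj'.subtype _ _)]
    _ ≤ 5 ^ Module.finrank ℝ E * ∫⁻ y, g y ∂μ := by
        gcongr
        exact Measure.restrict_le_self

theorem setLIntegral_ofReal_le_ofReal_integral {α : Type*} [MeasurableSpace α] {μ : Measure α}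
    {g : α → ℝ} (hg : Integrable g μ) (hg0 : 0 ≤ᵐ[μ] g) (s : Set α) :
    ∫⁻ x in s, ENNReal.ofReal (g x) ∂μ ≤ ENNReal.ofReal (∫ x, g x ∂μ) := by
  rw [ofReal_integral_eq_lintegral_ofReal hg hg0]
  exact setLIntegral_le_lintegral s _

theorem measureReal_ball_pos {X : Type*} [PseudoMetricSpace X] [ProperSpace X]
    [MeasurableSpace X] (μ : Measure X) [μ.IsOpenPosMeasure] [IsFiniteMeasureOnCompacts μ]
    (x : X) {r : ℝ} (hr : 0 < r) : 0 < μ.real (ball x r) :=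
  ENNReal.toReal_pos (measure_ball_pos μ x hr).ne' measure_ball_lt_top.ne

theorem volume_ball_eq_ofReal_mul_rpow {n : ℕ} (x : Fin n → ℝ) {r : ℝ} (hr : 0 < r) :
    volume (ball x r) = ENNReal.ofReal (volume.real (ball (0 : Fin n → ℝ) 1) * r ^ (n : ℝ)) := by
  rw [Measure.addHaar_ball_of_pos volume x hr, Module.finrank_fin_fun, Real.rpow_natCast,
    ENNReal.ofReal_mul measureReal_nonneg, ofReal_measureReal measure_ball_lt_top.ne, mul_comm]

theorem exists_rpow_mul_volume_ball_lt_of_lt_fracMax {n : ℕ} {s β lam : ℝ} (hs : 1 ≤ s)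
    (hlam : 0 ≤ lam) {f : (Fin n → ℝ) → ℝ} (hf : Measurable f) {x : Fin n → ℝ}
    (hx : ENNReal.ofReal lam < fracMax n β f x) :
    ∃ r, 0 < r ∧ ENNReal.ofReal (lam ^ s) * volume (ball x r) <
      ENNReal.ofReal (r ^ (β * s)) * ∫⁻ y in ball x r, ENNReal.ofReal (|f y| ^ s) := by
  simp only [fracMax, lt_iSup_iff] at hx
  obtain ⟨r, hr, hlt⟩ := hx
  refine ⟨r, hr, ?_⟩
  have hs0 : 0 < s := by linarith
  have hB0 : volume (ball x r) ≠ 0 := (measure_ball_pos volume x hr).ne'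
  have hBT : volume (ball x r) ≠ ∞ := measure_ball_lt_top.ne
  have : IsFiniteMeasure (volume.restrict (ball x r)) := isFiniteMeasure_restrict.mpr hBT
  have hpow (y : ℝ) : ENNReal.ofReal |y| ^ s = ENNReal.ofReal (|y| ^ s) :=
    ENNReal.ofReal_rpow_of_nonneg (abs_nonneg y) hs0.le
  rw [← ENNReal.div_eq_inv_mul, ← setLAverage_eq] at hlt
  have hjensen := rpow_laverage_le_laverage_rpow
    (hf.abs.ennreal_ofReal.aemeasurable (μ := volume.restrict (ball x r))) hs
  rw [← ENNReal.lt_div_iff_mul_lt (Or.inl hB0) (Or.inl hBT), mul_div_assoc,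
    ← ENNReal.ofReal_rpow_of_nonneg hlam hs0.le, Real.rpow_mul hr.le,
    ← ENNReal.ofReal_rpow_of_nonneg (Real.rpow_nonneg hr.le β) hs0.le]
  calc ENNReal.ofReal lam ^ s
      < (ENNReal.ofReal (r ^ β) * ⨍⁻ y in ball x r, ENNReal.ofReal |f y| ∂volume) ^ s :=
        ENNReal.rpow_lt_rpow hlt hs0
    _ ≤ _ := by
        rw [ENNReal.mul_rpow_of_nonneg _ _ hs0.le]
        gcongr
        simpa only [hpow, setLAverage_eq] using hjensen

theorem integral_rpow_abs_pos_of_lt_fracMax {n : ℕ} {s β lam : ℝ} (hs : 1 ≤ s)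
    (hlam : 0 ≤ lam) {f : (Fin n → ℝ) → ℝ} (hf : Measurable f)
    (hfs : Integrable fun y => |f y| ^ s) {x : Fin n → ℝ}
    (hx : ENNReal.ofReal lam < fracMax n β f x) : 0 < ∫ y, |f y| ^ s := by
  obtain ⟨r, -, hball⟩ := exists_rpow_mul_volume_ball_lt_of_lt_fracMax hs hlam hf hx
  by_contra! hI
  have hG := setLIntegral_ofReal_le_ofReal_integral hfs
    (ae_of_all _ fun y => by positivity) (ball x r)
  rw [ENNReal.ofReal_eq_zero.mpr hI, nonpos_iff_eq_zero] at hG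
  simp [hG] at hball

theorem exists_ball_le_mul_volume_le_of_lt_fracMax {n : ℕ} {s β lam R : ℝ} (hs : 1 ≤ s)
    (hβ : 0 ≤ β) (hβs : β * s < n) (hlam : 0 < lam) (hR : 0 ≤ R) {f : (Fin n → ℝ) → ℝ}
    (hf : Measurable f) (hfs : Integrable fun y => |f y| ^ s)
    (hRI : lam ^ s * volume.real (ball (0 : Fin n → ℝ) 1) * R ^ (n - β * s) = ∫ y, |f y| ^ s)
    {x : Fin n → ℝ} (hx : ENNReal.ofReal lam < fracMax n β f x) :
    ∃ r, 0 < r ∧ r ≤ R ∧ ENNReal.ofReal (lam ^ s / R ^ (β * s)) * volume (ball x r) ≤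
      ∫⁻ y in ball x r, ENNReal.ofReal (|f y| ^ s) := by
  obtain ⟨r, hr, hball⟩ := exists_rpow_mul_volume_ball_lt_of_lt_fracMax hs hlam.le hf hx
  set c := volume.real (ball (0 : Fin n → ℝ) 1)
  set G := ∫⁻ y in ball x r, ENNReal.ofReal (|f y| ^ s)
  have hc : 0 < c := measureReal_ball_pos volume 0 one_pos
  have hG : G ≤ ENNReal.ofReal (∫ y, |f y| ^ s) :=
    setLIntegral_ofReal_le_ofReal_integral hfs (ae_of_all _ fun y => by positivity) _
  have hreal : lam ^ s * (c * r ^ (n : ℝ)) < r ^ (β * s) * ∫ y, |f y| ^ s := by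
    have h : ENNReal.ofReal (lam ^ s) * volume (ball x r) <
        ENNReal.ofReal (r ^ (β * s)) * ENNReal.ofReal (∫ y, |f y| ^ s) :=
      hball.trans_le (by gcongr)
    rw [volume_ball_eq_ofReal_mul_rpow x hr, ← ENNReal.ofReal_mul (by positivity),
      ← ENNReal.ofReal_mul (by positivity)] at h
    exact (ENNReal.ofReal_lt_ofReal_iff_of_nonneg (by positivity)).mp h
  have hrR : r < R := by
    have hpow : r ^ (n - β * s) < R ^ (n - β * s) := by
      have hsplit : r ^ (n : ℝ) = r ^ (n - β * s) * r ^ (β * s) := by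
        rw [← Real.rpow_add hr]; ring_nf
      rw [hsplit, ← hRI] at hreal
      have hpos : 0 < lam ^ s * c * r ^ (β * s) := by positivity
      nlinarith
    exact (Real.rpow_lt_rpow_iff hr.le hR (by linarith)).mp hpow
  refine ⟨r, hr, hrR.le, ?_⟩
  calc ENNReal.ofReal (lam ^ s / R ^ (β * s)) * volume (ball x r)
      ≤ ENNReal.ofReal (lam ^ s / r ^ (β * s)) * volume (ball x r) := by
        gcongr
    _ = ENNReal.ofReal (lam ^ s) * volume (ball x r) / ENNReal.ofReal (r ^ (β * s)) := by
        rw [ENNReal.ofReal_div_of_pos (by positivity), div_eq_mul_inv, div_eq_mul_inv]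
        ring
    _ ≤ G := ENNReal.div_le_of_le_mul' hball.le

theorem volume_lt_fracMax_le {n : ℕ} {s β lam R : ℝ} (hs : 1 ≤ s) (hβ : 0 ≤ β)
    (hβs : β * s < n) (hlam : 0 < lam) (hR : 0 < R) {f : (Fin n → ℝ) → ℝ}
    (hf : Measurable f) (hfs : Integrable fun y => |f y| ^ s)
    (hRI : lam ^ s * volume.real (ball (0 : Fin n → ℝ) 1) * R ^ (n - β * s) = ∫ y, |f y| ^ s) :
    volume {x | ENNReal.ofReal lam < fracMax n β f x} ≤
      5 ^ n * volume (ball (0 : Fin n → ℝ) R) := by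
  set K := ENNReal.ofReal (lam ^ s / R ^ (β * s))
  have hK : K ≠ 0 := (ENNReal.ofReal_pos.mpr (by positivity)).ne'
  have hcover := mul_measure_le_of_forall_exists_ball volume fun x hx =>
    exists_ball_le_mul_volume_le_of_lt_fracMax hs hβ hβs hlam hR.le hf hfs hRI hx
  have hKB : K * volume (ball (0 : Fin n → ℝ) R) = ∫⁻ y, ENNReal.ofReal (|f y| ^ s) := by
    rw [← ofReal_integral_eq_lintegral_ofReal hfs (ae_of_all _ fun y => by positivity), ← hRI,
      volume_ball_eq_ofReal_mul_rpow 0 hR, ← ENNReal.ofReal_mul (by positivity),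
      Real.rpow_sub hR]
    congr 1
    field_simp
  rw [Module.finrank_fin_fun, ← hKB, mul_left_comm] at hcover
  exact (ENNReal.mul_le_mul_iff_right hK ENNReal.ofReal_ne_top).mp hcover

theorem volume_lt_fracMax_le_rpow {n : ℕ} {s β lam : ℝ} (hs : 1 ≤ s) (hβ : 0 ≤ β)
    (hβs : β * s < n) (hlam : 0 < lam) {f : (Fin n → ℝ) → ℝ} (hf : Measurable f)
    (hfs : Integrable fun y => |f y| ^ s) (hI : 0 < ∫ y, |f y| ^ s) :
    volume {x | ENNReal.ofReal lam < fracMax n β f x} ≤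
      ENNReal.ofReal (5 ^ n * volume.real (ball (0 : Fin n → ℝ) 1) ^ (-(β * s) / (n - β * s)) *
        (lam ^ (-s) * ∫ y, |f y| ^ s) ^ ((n : ℝ) / (n - β * s))) := by
  set p : ℝ := n - β * s
  have hp : 0 < p := by linarith
  set c := volume.real (ball (0 : Fin n → ℝ) 1)
  have hc : 0 < c := measureReal_ball_pos volume 0 one_pos
  set L := lam ^ (-s) * ∫ y, |f y| ^ s with hLdef
  have hL : 0 < L := by positivity
  set R := (L / c) ^ p⁻¹
  have hR : 0 < R := by positivity
  have hRp : R ^ p = L / c := Real.rpow_inv_rpow (by positivity) hp.ne'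
  have hRI : lam ^ s * c * R ^ p = ∫ y, |f y| ^ s := by
    rw [hRp, hLdef, Real.rpow_neg hlam.le]
    field_simp
  have hRn : R ^ (n : ℝ) = (L / c) ^ ((n : ℝ) / p) := by
    rw [← hRp, ← Real.rpow_mul hR.le, mul_div_cancel₀ _ hp.ne']
  have hexp : -(β * s) / p = 1 - n / p := by
    field_simp
    ring
  calc volume {x | ENNReal.ofReal lam < fracMax n β f x}
      ≤ 5 ^ n * volume (ball (0 : Fin n → ℝ) R) :=
        volume_lt_fracMax_le hs hβ hβs hlam hR hf hfs hRI
    _ = ENNReal.ofReal (5 ^ n * (c * R ^ (n : ℝ))) := by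
        rw [volume_ball_eq_ofReal_mul_rpow 0 hR, ← ENNReal.ofReal_ofNat,
          ← ENNReal.ofReal_pow (by norm_num), ← ENNReal.ofReal_mul (by positivity)]
    _ = ENNReal.ofReal (5 ^ n * c ^ (-(β * s) / p) * L ^ ((n : ℝ) / p)) := by
        rw [hRn, Real.div_rpow hL.le hc.le, hexp, Real.rpow_sub hc, Real.rpow_one]
        field_simp

/-- Weak-type boundedness of the fractional maximal operator. -/
theorem fracMax_weak_type
    (n : ℕ) (s β : ℝ) (hs : 1 ≤ s) (hβ0 : 0 ≤ β) (hβ : β < n / s)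
    (f : (Fin n → ℝ) → ℝ) (hmeas : Measurable f)
    (hf : Integrable (fun x => |f x| ^ s)) :
    ∃ C : ℝ, 0 < C ∧ ∀ lam : ℝ, 0 < lam →
      volume {x : Fin n → ℝ | ENNReal.ofReal lam < fracMax n β f x} ≤
        ENNReal.ofReal
          (C * (lam ^ (-s) * ∫ x, |f x| ^ s) ^ ((n : ℝ) / (n - β * s))) := by
  have hβs : β * s < n := (lt_div_iff₀ (by linarith)).mp hβ
  set c := volume.real (ball (0 : Fin n → ℝ) 1)
  have hc : 0 < c := measureReal_ball_pos volume 0 one_pos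
  refine ⟨5 ^ n * c ^ (-(β * s) / (n - β * s)), by positivity, fun lam hlam => ?_⟩
  rcases Set.eq_empty_or_nonempty {x | ENNReal.ofReal lam < fracMax n β f x} with hE | ⟨x, hx⟩
  · simp [hE]
  exact volume_lt_fracMax_le_rpow hs hβ0 hβs hlam hmeas hf
    (integral_rpow_abs_pos_of_lt_fracMax hs hlam.le hmeas hf hx)
end
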